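/- Let T be a homeomorphism of a compact metric space X. In the proof of the tracing result: if x ∈ CR(X,T) and for every δ > 0 the periodic δ-pseudotrajectory through x (obtained by repeating a finite δ-chain from x to x of period n) is ε-traced by finitely many exact trajectories {T^k(y_m)}, then there exists a point q in the ω-limit set of some y_m with ρ(q, x) ≤ ε. -/

import Mathlib

/-! Along the multiples `j * n` of the period the pseudotrajectory sits at `x`, so for each `j`
some `T^[j * n] y` with `y ∈ Y` lies in the closed ball of radius `ε` about `x`. As `Y` is finite,
one `y` does so for infinitely many times, and a cluster point of those iterates in the compact
ball is a point of `ω(y)` within `ε` of `x`. -/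

open Metric Filter Set Topology
open scoped Classical

variable {X : Type*}

/-- A set of naturals is syndetic: bounded gaps. -/
def Syndetic (S : Set ℕ) : Prop := ∃ n : ℕ, ∀ m : ℕ, ∃ k ∈ S, m ≤ k ∧ k ≤ m + n

/-- Forward orbit of a point. -/
def fwdOrbit (T : X → X) (y : X) : Set X := Set.range fun k : ℕ => T^[k] y

/-- A point is minimal (almost periodic): its forward orbit closure is a minimal set. -/
def IsMinimalPt [TopologicalSpace X] (T : X → X) (y : X) : Prop :=
  ∀ z ∈ closure (fwdOrbit T y), closure (fwdOrbit T z) = closure (fwdOrbit T y)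

/-- ℤ-iteration of a homeomorphism. -/
noncomputable def zIter [TopologicalSpace X] (T : X ≃ₜ X) (n : ℤ) : X → X :=
  if 0 ≤ n then (⇑T)^[n.toNat] else (⇑T.symm)^[(-n).toNat]

/-- `A` is an `ε`-network: every point of the space is within `ε` of `A`. -/
def IsNet [PseudoMetricSpace X] (ε : ℝ) (A : Set X) : Prop :=
  ∀ x : X, ∃ a ∈ A, dist x a ≤ ε

/-- A point is nonwandering (w.r.t. forward iterates). -/
def NonWandering [TopologicalSpace X] (T : X → X) (x : X) : Prop :=
  ∀ U : Set X, IsOpen U → x ∈ U → ∃ k : ℕ, 1 ≤ k ∧ ((fun p => T^[k] p) '' U ∩ U).Nonempty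

/-- One-sided `d`-pseudotrajectory. -/
def IsPseudoTraj [PseudoMetricSpace X] (T : X → X) (d : ℝ) (x : ℕ → X) : Prop :=
  ∀ k : ℕ, dist (x (k + 1)) (T (x k)) ≤ d

/-- Two-sided `d`-pseudotrajectory. -/
def IsPseudoTrajZ [PseudoMetricSpace X] (T : X → X) (d : ℝ) (x : ℤ → X) : Prop :=
  ∀ k : ℤ, dist (x (k + 1)) (T (x k)) ≤ d

/-- A chain recurrent point. -/
def ChainRec [PseudoMetricSpace X] (T : X → X) (x : X) : Prop :=
  ∀ d > (0 : ℝ), ∃ n : ℕ, 1 ≤ n ∧ ∃ c : ℕ → X, c 0 = x ∧ c n = x ∧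
    ∀ k < n, dist (c (k + 1)) (T (c k)) ≤ d

/-- ω-limit set of a point under a map. -/
def omegaSet [TopologicalSpace X] (T : X → X) (y : X) : Set X :=
  {p | ∃ φ : ℕ → ℕ, StrictMono φ ∧ Tendsto (fun n => T^[φ n] y) atTop (nhds p)}

/-- The set of recurrent points (`x ∈ ω(x)`). -/
def RecurrentPts [TopologicalSpace X] (T : X → X) : Set X := {x | x ∈ omegaSet T x}

/-- The multishadowing property (for homeomorphisms, two-sided). -/
def Multishadowing [PseudoMetricSpace X] (T : X ≃ₜ X) : Prop :=
  ∀ ε > (0 : ℝ), ∃ d > (0 : ℝ), ∀ x : ℤ → X, IsPseudoTrajZ (⇑T) d x →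
    ∃ Y : Finset X, ∀ k : ℤ, ∃ y ∈ Y, dist (x k) (zIter T k y) < ε

/-- Topological support of a measure: points all of whose open neighborhoods
have positive measure. -/
def msupp [TopologicalSpace X] [MeasurableSpace X] (μ : MeasureTheory.Measure X) : Set X :=
  {x | ∀ U : Set X, IsOpen U → x ∈ U → 0 < μ U}

/-- Counting function for density computations. -/
noncomputable def cnt (K : Set ℕ) (N : ℕ) : ℝ :=
  ((Finset.range (N + 1)).filter (· ∈ K)).card

lemma zIter_natCast [TopologicalSpace X] (T : X ≃ₜ X) (m : ℕ) : zIter T m = (⇑T)^[m] := by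
  simp [zIter]

lemma mem_omegaSet_of_mapClusterPt [TopologicalSpace X] [FirstCountableTopology X]
    {T : X → X} {y p : X} (h : MapClusterPt p atTop fun k => T^[k] y) : p ∈ omegaSet T y :=
  h.tendsto_subseq

lemma exists_mem_omegaSet_of_frequently_mem [TopologicalSpace X] [FirstCountableTopology X]
    {T : X → X} {y : X} {K : Set X} (hK : IsCompact K) (h : ∃ᶠ k in atTop, T^[k] y ∈ K) :
    ∃ q ∈ K, q ∈ omegaSet T y :=
  let ⟨q, hqK, hq⟩ := hK.exists_mapClusterPt_of_frequently h
  ⟨q, hqK, mem_omegaSet_of_mapClusterPt hq⟩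

lemma frequently_exists_dist_iterate_le_of_periodic [PseudoMetricSpace X] (T : X ≃ₜ X)
    {n : ℕ} (hn : 1 ≤ n) {c : ℤ → X} (hper : Function.Periodic c n) {Y : Finset X} {ε : ℝ}
    (htrace : ∀ k : ℤ, ∃ y ∈ Y, dist (c k) (zIter T k y) ≤ ε) :
    ∃ᶠ k in atTop, ∃ y ∈ Y, dist (c 0) ((⇑T)^[k] y) ≤ ε := by
  refine frequently_atTop.2 fun j => ⟨j * n, Nat.le_mul_of_pos_right j hn, ?_⟩
  obtain ⟨y, hy, hdist⟩ := htrace ((j * n : ℕ) : ℤ)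
  refine ⟨y, hy, ?_⟩
  rwa [zIter_natCast, Nat.cast_mul, hper.nat_mul_eq] at hdist

theorem stmt18_general [MetricSpace X] [CompactSpace X] (T : X ≃ₜ X)
    (x : X) (ε : ℝ)
    (n : ℕ) (hn : 1 ≤ n) (c : ℤ → X)
    (hper : ∀ k : ℤ, c (k + (n : ℤ)) = c k) (hc0 : c 0 = x)
    (Y : Finset X) (htrace : ∀ k : ℤ, ∃ y ∈ Y, dist (c k) (zIter T k y) ≤ ε) :
    ∃ y ∈ Y, ∃ q ∈ omegaSet (⇑T) y, dist q x ≤ ε := by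
  have hfreq := frequently_exists_dist_iterate_le_of_periodic T hn hper htrace
  obtain ⟨y, hy, hfreq_y⟩ := Y.frequently_exists.1 hfreq
  have hball : ∃ᶠ k in atTop, (⇑T)^[k] y ∈ closedBall x ε :=
    hfreq_y.mono fun k hk => by rwa [mem_closedBall, dist_comm, ← hc0]
  obtain ⟨q, hq, hω⟩ := exists_mem_omegaSet_of_frequently_mem isClosed_closedBall.isCompact hball
  exact ⟨y, hy, q, hω, mem_closedBall.1 hq⟩

theorem stmt18 [MetricSpace X] [CompactSpace X] (T : X ≃ₜ X)
    (x : X) (hx : ChainRec (⇑T) x) (ε δ : ℝ) (hε : 0 < ε) (hδ : 0 < δ)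
    (n : ℕ) (hn : 1 ≤ n) (c : ℤ → X)
    (hper : ∀ k : ℤ, c (k + (n : ℤ)) = c k) (hc0 : c 0 = x)
    (hpseudo : IsPseudoTrajZ (⇑T) δ c)
    (Y : Finset X) (htrace : ∀ k : ℤ, ∃ y ∈ Y, dist (c k) (zIter T k y) ≤ ε) :
    ∃ y ∈ Y, ∃ q ∈ omegaSet (⇑T) y, dist q x ≤ ε :=
  stmt18_general T x ε n hn c hper hc0 Y htrace
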